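/- Let E be a locally convex space such that the identity map from E'_{w*} to E'_β with its weak topology is sequentially continuous, and suppose there is a continuous linear operator T : c₀ → E whose image of the unit ball is not barrel-precompact in E. Then E is not Gelfand–Phillips. -/

import Mathlib

open Filter Topology Pointwise ZeroAtInfty

section Defs

variable {E : Type*} [AddCommGroup E] [Module ℝ E] [TopologicalSpace E]

/-- A *barrel* is a closed, balanced, convex, absorbing set. -/
def IsBarrel (B : Set E) : Prop :=
  IsClosed B ∧ Balanced ℝ B ∧ Convex ℝ B ∧ Absorbent ℝ B

/-- A set is *barrel-bounded* if it is absorbed by every barrel. -/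
def BarrelBounded (A : Set E) : Prop :=
  ∀ B : Set E, IsBarrel B → ∃ c : ℝ, A ⊆ c • B

/-- A set is *barrel-precompact* if it is precompact in the topology generated by barrels. -/
def BarrelPrecompact (A : Set E) : Prop :=
  ∀ B : Set E, IsBarrel B → ∃ F : Set E, F.Finite ∧ A ⊆ F + B

/-- A set `A` is *limited* if every weak* null sequence of continuous functionals converges
to `0` uniformly on `A`. -/
def LimitedSet (A : Set E) : Prop :=
  ∀ χ : ℕ → E →L[ℝ] ℝ, (∀ x : E, Tendsto (fun n => χ n x) atTop (𝓝 0)) →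
    ∀ ε : ℝ, 0 < ε → ∀ᶠ n in atTop, ∀ a ∈ A, |χ n a| ≤ ε

/-- `E` is *Gelfand–Phillips* if every barrel-bounded limited set is barrel-precompact. -/
def GelfandPhillips (E : Type*) [AddCommGroup E] [Module ℝ E] [TopologicalSpace E] : Prop :=
  ∀ A : Set E, BarrelBounded A → LimitedSet A → BarrelPrecompact A

end Defs

/-!
`A = T(closedBall 0 1)` is barrel-bounded because `c₀` is a Baire space, so every barrel of `c₀`
is a neighbourhood of `0`. It is also limited: if `χₙ` is weak* null, the rows
`aₙ = (χₙ (T eₖ))ₖ` lie in `ℓ¹ = c₀'`, and for `b` in the unit ball of `ℓ∞` the functional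
`χ ↦ ∑ₖ bₖ χ (T eₖ)` is continuous on `E'_β`, being the pairing with `b` after `χ ↦ χ ∘ T`.
So the hypothesis makes `(aₙ)` weakly null in `ℓ¹`, the Schur property (gliding hump) gives
`‖aₙ‖₁ → 0`, and `|χₙ (T x)| ≤ ‖aₙ‖₁ ‖x‖`. A Gelfand–Phillips `E` would make `A`
barrel-precompact.
-/

noncomputable def c0Single (k : ℕ) : C₀(ℕ, ℝ) where
  toFun := Pi.single k 1
  continuous_toFun := continuous_of_discreteTopology
  zero_at_infty' := by
    rw [cocompact_eq_atTop]
    refine tendsto_const_nhds.congr' ?_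
    filter_upwards [eventually_gt_atTop k] with m hm
    simp [hm.ne']

@[simp]
lemma c0Single_apply (k m : ℕ) : c0Single k m = (Pi.single k 1 : ℕ → ℝ) m := rfl

noncomputable def c0Trunc (b : ℕ → ℝ) (N : ℕ) : C₀(ℕ, ℝ) :=
  ∑ k ∈ Finset.range N, b k • c0Single k

lemma c0Trunc_apply (b : ℕ → ℝ) (N m : ℕ) : c0Trunc b N m = if m < N then b m else 0 := by
  induction N with
  | zero => simp [c0Trunc]
  | succ N ih =>
    rw [c0Trunc, Finset.sum_range_succ, ZeroAtInftyContinuousMap.add_apply, ← c0Trunc, ih]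
    rcases lt_trichotomy m N with h | rfl | h
    · simp [h, h.trans N.lt_succ_self, h.ne]
    · simp
    · simp [h.ne', not_lt.2 h.le, not_lt.2 (Nat.succ_le_of_lt h)]

lemma ZeroAtInftyContinuousMap.norm_apply_le {α β : Type*} [TopologicalSpace α]
    [NormedAddCommGroup β] (f : C₀(α, β)) (a : α) : ‖f a‖ ≤ ‖f‖ := by
  rw [← norm_toBCF_eq_norm]
  exact f.toBCF.norm_coe_le_norm a

lemma ZeroAtInftyContinuousMap.norm_le {α β : Type*} [TopologicalSpace α]
    [NormedAddCommGroup β] {f : C₀(α, β)} {C : ℝ} (hC : 0 ≤ C) : ‖f‖ ≤ C ↔ ∀ a, ‖f a‖ ≤ C := by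
  rw [← norm_toBCF_eq_norm]
  exact BoundedContinuousFunction.norm_le hC

lemma norm_c0Trunc_le {b : ℕ → ℝ} {C : ℝ} (hC : 0 ≤ C) (hb : ∀ k, |b k| ≤ C) (N : ℕ) :
    ‖c0Trunc b N‖ ≤ C := by
  refine (ZeroAtInftyContinuousMap.norm_le hC).2 fun m => ?_
  rw [c0Trunc_apply]
  split_ifs
  · exact hb m
  · simpa using hC

lemma tendsto_c0Trunc (x : C₀(ℕ, ℝ)) : Tendsto (c0Trunc x) atTop (𝓝 x) := by
  have hx : Tendsto x atTop (𝓝 0) := by simpa [cocompact_eq_atTop] using x.zero_at_infty'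
  rw [Metric.tendsto_atTop]
  intro ε hε
  obtain ⟨N, hN⟩ := Metric.tendsto_atTop.1 hx (ε / 2) (half_pos hε)
  refine ⟨N, fun n hn => (lt_of_le_of_lt ?_ (half_lt_self hε))⟩
  rw [dist_eq_norm, ZeroAtInftyContinuousMap.norm_le (half_pos hε).le]
  intro m
  rw [ZeroAtInftyContinuousMap.sub_apply, c0Trunc_apply]
  split_ifs with hm
  · simpa using (half_pos hε).le
  · simpa using (hN m (hn.trans (not_lt.1 hm))).le

section DualOfC0

variable (g : C₀(ℕ, ℝ) →L[ℝ] ℝ)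

lemma map_c0Trunc (b : ℕ → ℝ) (N : ℕ) :
    g (c0Trunc b N) = ∑ k ∈ Finset.range N, b k * g (c0Single k) := by
  simp [c0Trunc, map_sum, map_smul]

lemma sum_abs_map_c0Single_le (N : ℕ) : ∑ k ∈ Finset.range N, |g (c0Single k)| ≤ ‖g‖ := by
  let b k : ℝ := SignType.sign (g (c0Single k))
  have hb : ∀ k, |b k| ≤ 1 := fun k => by
    rcases lt_trichotomy (g (c0Single k)) 0 with h | h | h <;> simp [b, h]
  calc ∑ k ∈ Finset.range N, |g (c0Single k)| = g (c0Trunc b N) := by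
        simp [map_c0Trunc, b]
    _ ≤ ‖g‖ * ‖c0Trunc b N‖ := (le_abs_self _).trans (g.le_opNorm _)
    _ ≤ ‖g‖ := mul_le_of_le_one_right (norm_nonneg g) (norm_c0Trunc_le zero_le_one hb N)

lemma summable_abs_map_c0Single : Summable fun k => |g (c0Single k)| :=
  summable_of_sum_range_le (fun _ => abs_nonneg _) (sum_abs_map_c0Single_le g)

lemma tsum_abs_map_c0Single_le : ∑' k, |g (c0Single k)| ≤ ‖g‖ :=
  Real.tsum_le_of_sum_range_le (fun _ => abs_nonneg _) (sum_abs_map_c0Single_le g)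

lemma abs_map_le_tsum_mul_norm (x : C₀(ℕ, ℝ)) :
    |g x| ≤ (∑' k, |g (c0Single k)|) * ‖x‖ := by
  have hlim : Tendsto (fun N => |g (c0Trunc x N)|) atTop (𝓝 |g x|) :=
    ((g.continuous.tendsto x).comp (tendsto_c0Trunc x)).abs
  refine le_of_tendsto hlim (Eventually.of_forall fun N => ?_)
  rw [map_c0Trunc]
  calc |∑ k ∈ Finset.range N, x k * g (c0Single k)|
      ≤ ∑ k ∈ Finset.range N, |g (c0Single k)| * ‖x‖ := by
        refine (Finset.abs_sum_le_sum_abs _ _).trans (Finset.sum_le_sum fun k _ => ?_)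
        rw [abs_mul, mul_comm]
        exact mul_le_mul_of_nonneg_left (by simpa using x.norm_apply_le k) (abs_nonneg _)
    _ ≤ (∑' k, |g (c0Single k)|) * ‖x‖ := by
        rw [← Finset.sum_mul]
        exact mul_le_mul_of_nonneg_right
          ((summable_abs_map_c0Single g).sum_le_tsum _ fun _ _ => abs_nonneg _) (norm_nonneg x)

end DualOfC0

lemma abs_mul_le_abs_of_abs_le_one {a x : ℝ} (ha : |a| ≤ 1) : |a * x| ≤ |x| := by
  rw [abs_mul]
  exact mul_le_of_le_one_left (abs_nonneg x) ha

section Pairing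

variable {b : ℕ → ℝ}

lemma summable_mul_map_c0Single (hb : ∀ k, |b k| ≤ 1) (g : C₀(ℕ, ℝ) →L[ℝ] ℝ) :
    Summable fun k => b k * g (c0Single k) :=
  (summable_abs_map_c0Single g).of_norm_bounded fun k => abs_mul_le_abs_of_abs_le_one (hb k)

noncomputable def c0DualPairing (hb : ∀ k, |b k| ≤ 1) : (C₀(ℕ, ℝ) →L[ℝ] ℝ) →L[ℝ] ℝ :=
  LinearMap.mkContinuous
    { toFun := fun g : C₀(ℕ, ℝ) →L[ℝ] ℝ => ∑' k, b k * g (c0Single k)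
      map_add' := fun g h => by
        simp only [add_apply, mul_add]
        exact (summable_mul_map_c0Single hb g).tsum_add (summable_mul_map_c0Single hb h)
      map_smul' := fun r g => by
        simp only [smul_apply, smul_eq_mul, RingHom.id_apply, ← tsum_mul_left]
        congr 1 with k
        ring }
    1 fun g => by
      rw [one_mul]
      exact (norm_tsum_le_tsum_norm (summable_mul_map_c0Single hb g).norm).trans <|
        (Summable.tsum_le_tsum (fun k => abs_mul_le_abs_of_abs_le_one (hb k))
        (summable_mul_map_c0Single hb g).norm (summable_abs_map_c0Single g)).trans
        (tsum_abs_map_c0Single_le g)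

end Pairing

lemma StrictMono.exists_block_index {M : ℕ → ℕ} (hM : StrictMono M) :
    ∃ c : ℕ → ℕ, ∀ i k, M i ≤ k → k < M (i + 1) → c k = i := by
  have hex : ∀ k, ∃ i, k < M (i + 1) := fun k => ⟨k, k.lt_succ_self.trans_le (hM.id_le _)⟩
  refine ⟨fun k => Nat.find (hex k), fun i k hik hki => le_antisymm (Nat.find_min' _ hki) ?_⟩
  by_contra! h
  exact (Nat.find_spec (hex k)).not_ge ((hM.monotone h).trans hik)

lemma tsum_abs_sub_le_tsum_mul {f b : ℕ → ℝ} (hf : Summable fun k => |f k|)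
    (hb : ∀ k, |b k| ≤ 1) {L R : ℕ} (hLR : L ≤ R)
    (hbf : ∀ k, L ≤ k → k < R → b k * f k = |f k|) :
    ∑' k, |f k| - 2 * (∑ k ∈ Finset.range L, |f k| + ∑' k, |f (k + R)|) ≤ ∑' k, b k * f k := by
  set d : ℕ → ℝ := fun k => |f k| - b k * f k
  have hd_le : ∀ k, d k ≤ 2 * |f k| := fun k => by
    linarith [neg_abs_le (b k * f k), abs_mul_le_abs_of_abs_le_one (x := f k) (hb k)]
  have hbf_sum : Summable fun k => b k * f k :=
    hf.of_norm_bounded fun k => abs_mul_le_abs_of_abs_le_one (hb k)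
  have hd_sum : Summable d := hf.sub hbf_sum
  have hhead : ∑ k ∈ Finset.range L, d k ≤ 2 * ∑ k ∈ Finset.range L, |f k| := by
    rw [Finset.mul_sum]
    exact Finset.sum_le_sum fun k _ => hd_le k
  have hblock : ∑ k ∈ Finset.Ico L R, d k = 0 :=
    Finset.sum_eq_zero fun k hk => by
      rw [Finset.mem_Ico] at hk
      simp [d, hbf k hk.1 hk.2]
  have htail : ∑' k, d (k + R) ≤ 2 * ∑' k, |f (k + R)| := by
    rw [← tsum_mul_left]
    exact Summable.tsum_le_tsum (fun k => hd_le (k + R)) ((summable_nat_add_iff R).2 hd_sum)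
      (((summable_nat_add_iff R).2 hf).mul_left 2)
  have hsplit : ∑' k, d k = ∑ k ∈ Finset.range L, d k + ∑ k ∈ Finset.Ico L R, d k
      + ∑' k, d (k + R) := by
    rw [Finset.sum_range_add_sum_Ico _ hLR, hd_sum.sum_add_tsum_nat_add]
  have hdiff : ∑' k, d k = ∑' k, |f k| - ∑' k, b k * f k := hf.tsum_sub hbf_sum
  linarith

section Schur

variable {a : ℕ → ℕ → ℝ}

lemma tendsto_apply_of_tendsto_tsum_mul
    (hweak : ∀ b : ℕ → ℝ, (∀ k, |b k| ≤ 1) → Tendsto (fun n => ∑' k, b k * a n k) atTop (𝓝 0))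
    (k : ℕ) : Tendsto (fun n => a n k) atTop (𝓝 0) := by
  have hsingle : ∀ j, |(Pi.single k 1 : ℕ → ℝ) j| ≤ 1 := fun j => by
    by_cases h : j = k <;> simp [h]
  simpa [Pi.single_apply] using hweak _ hsingle

lemma exists_gliding_hump (hcoord : ∀ k, Tendsto (fun n => a n k) atTop (𝓝 0))
    {ε δ : ℝ} (hδ : 0 < δ) (hfreq : ∃ᶠ n in atTop, ε ≤ ∑' k, |a n k|) (n M : ℕ) :
    ∃ n' M', n < n' ∧ M < M' ∧ ε ≤ ∑' k, |a n' k| ∧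
      ∑ k ∈ Finset.range M, |a n' k| < δ ∧ ∑' k, |a n' (k + M')| < δ := by
  have hhead : Tendsto (fun n => ∑ k ∈ Finset.range M, |a n k|) atTop (𝓝 0) := by
    simpa using tendsto_finsetSum (Finset.range M) fun k _ => (hcoord k).abs
  obtain ⟨n', ⟨hbig, hsmall⟩, hn'⟩ :=
    ((hfreq.and_eventually (hhead.eventually (gt_mem_nhds hδ))).and_eventually
      (eventually_gt_atTop n)).exists
  obtain ⟨M', htail, hM'⟩ := (((tendsto_sum_nat_add fun k => |a n' k|).eventually
    (gt_mem_nhds hδ)).and (eventually_gt_atTop M)).exists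
  exact ⟨n', M', hn', hM', hbig, hsmall, htail⟩

theorem tendsto_tsum_abs_of_tendsto_tsum_mul (hsum : ∀ n, Summable fun k => |a n k|)
    (hweak : ∀ b : ℕ → ℝ, (∀ k, |b k| ≤ 1) → Tendsto (fun n => ∑' k, b k * a n k) atTop (𝓝 0)) :
    Tendsto (fun n => ∑' k, |a n k|) atTop (𝓝 0) := by
  refine tendsto_order.2 ⟨fun ε hε => Eventually.of_forall fun n =>
    hε.trans_le (tsum_nonneg fun _ => abs_nonneg _), fun ε hε => ?_⟩
  by_contra hnot
  have hfreq : ∃ᶠ n in atTop, ε ≤ ∑' k, |a n k| := by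
    simpa only [not_eventually, not_lt] using hnot
  choose n' M' hn hM hbig hhead htail using
    exists_gliding_hump (tendsto_apply_of_tendsto_tsum_mul hweak) (by positivity : 0 < ε / 8) hfreq
  set q : ℕ → ℕ × ℕ := fun i => (fun p : ℕ × ℕ => (n' p.1 p.2, M' p.1 p.2))^[i] (0, 0)
  have hq : ∀ i, q (i + 1) = (n' (q i).1 (q i).2, M' (q i).1 (q i).2) := fun i =>
    Function.iterate_succ_apply' _ _ _
  set row : ℕ → ℕ := fun i => (q (i + 1)).1
  set M : ℕ → ℕ := fun i => (q i).2
  have hrow : StrictMono row := strictMono_nat_of_lt_succ fun i => by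
    simp only [row, hq (i + 1)]
    exact hn _ _
  have hMmono : StrictMono M := strictMono_nat_of_lt_succ fun i => by
    simp only [M, hq i]
    exact hM _ _
  -- Row `row i` carries mass `≥ ε - ε / 4` on the block `[M i, M (i + 1))`, so testing against
  -- the signs of all these disjoint humps at once keeps every `∑ₖ bₖ a (row i) k` above `ε / 2`.
  obtain ⟨c, hc⟩ := hMmono.exists_block_index
  set b : ℕ → ℝ := fun k => SignType.sign (a (row (c k)) k)
  have hb : ∀ k, |b k| ≤ 1 := fun k => by
    rcases lt_trichotomy (a (row (c k)) k) 0 with h | h | h <;> simp [b, h]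
  have hlow : ∀ i, ε / 2 ≤ ∑' k, b k * a (row i) k := fun i => by
    have hhump := tsum_abs_sub_le_tsum_mul (hsum (row i)) hb (hMmono.monotone i.le_succ)
      fun k hik hki => by simp [b, hc i k hik hki]
    have hrow_i : row i = n' (q i).1 (q i).2 := by simp only [row, hq i]
    have hM_i : M (i + 1) = M' (q i).1 (q i).2 := by simp only [M, hq i]
    rw [hM_i, hrow_i] at hhump
    rw [hrow_i]
    linarith [hbig (q i).1 (q i).2, hhead (q i).1 (q i).2, htail (q i).1 (q i).2]
  obtain ⟨i, hi⟩ := (((hweak b hb).comp hrow.tendsto_atTop).eventually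
    (gt_mem_nhds (by positivity : 0 < ε / 2))).exists
  exact (hlow i).not_gt hi

end Schur

section Barrels

variable {X E : Type*} [AddCommGroup X] [Module ℝ X] [TopologicalSpace X]
  [AddCommGroup E] [Module ℝ E] [TopologicalSpace E]

lemma IsBarrel.preimage {B : Set E} (hB : IsBarrel B) (T : X →L[ℝ] E) : IsBarrel (T ⁻¹' B) := by
  obtain ⟨hcl, hbal, hcv, habs⟩ := hB
  refine ⟨hcl.preimage T.continuous, hbal.mulActionHom_preimage T.toLinearMap.toMulActionHom,
    hcv.linear_preimage T.toLinearMap, absorbent_iff_inv_smul.2 fun x => ?_⟩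
  filter_upwards [absorbent_iff_inv_smul.1 habs (T x)] with c hc
  simpa [Set.mem_preimage, map_smul] using hc

lemma IsBarrel.mem_nhds_zero [IsTopologicalAddGroup X] [ContinuousConstSMul ℝ X] [BaireSpace X]
    {B : Set X} (hB : IsBarrel B) : B ∈ 𝓝 0 := by
  obtain ⟨hcl, hbal, hcv, habs⟩ := hB
  have hcover : ⋃ n : ℕ, ((n + 1 : ℕ) : ℝ) • B = Set.univ :=
    Set.eq_univ_of_forall fun x => Set.mem_iUnion.2 <|
      ((tendsto_natCast_atTop_cobounded.comp (tendsto_add_atTop_nat 1)).eventually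
        (habs x)).exists.imp fun _ hn => hn rfl
  obtain ⟨n, z, hz⟩ := nonempty_interior_of_iUnion_of_closed
    (fun n : ℕ => hcl.smul_of_ne_zero (by positivity : ((n + 1 : ℕ) : ℝ) ≠ 0)) hcover
  rw [interior_smul₀ (by positivity : ((n + 1 : ℕ) : ℝ) ≠ 0)] at hz
  obtain ⟨y, hy, -⟩ := hz
  have h0 : (0 : X) ∈ interior B := by
    simpa using hcv.combo_interior_self_mem_interior hy (hbal.neg_mem_iff.2 (interior_subset hy))
      (by norm_num : (0 : ℝ) < 1 / 2) (by norm_num : (0 : ℝ) ≤ 1 / 2) (by norm_num)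
  exact mem_interior_iff_mem_nhds.1 h0

lemma barrelBounded_image_closedBall {X : Type*} [NormedAddCommGroup X] [NormedSpace ℝ X]
    [CompleteSpace X] (T : X →L[ℝ] E) : BarrelBounded (T '' Metric.closedBall 0 1) := by
  intro B hB
  obtain ⟨r, hr, hsub⟩ := Metric.nhds_basis_closedBall.mem_iff.1 (hB.preimage T).mem_nhds_zero
  refine ⟨r⁻¹, ?_⟩
  rintro _ ⟨x, hx, rfl⟩
  have hrx : r • x ∈ T ⁻¹' B := hsub <| by
    rw [mem_closedBall_zero_iff, norm_smul, Real.norm_of_nonneg hr.le]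
    exact mul_le_of_le_one_right hr.le (mem_closedBall_zero_iff.1 hx)
  exact ⟨T (r • x), hrx, by simp [smul_smul, hr.ne']⟩

end Barrels

lemma limitedSet_image_closedBall {E : Type*} [AddCommGroup E] [Module ℝ E] [TopologicalSpace E]
    (hseq : ∀ χ : ℕ → E →L[ℝ] ℝ,
      (∀ x : E, Tendsto (fun n => χ n x) atTop (𝓝 0)) →
      ∀ Ψ : (E →L[ℝ] ℝ) →L[ℝ] ℝ, Tendsto (fun n => Ψ (χ n)) atTop (𝓝 0))
    (T : C₀(ℕ, ℝ) →L[ℝ] E) : LimitedSet (T '' Metric.closedBall 0 1) := by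
  intro χ hχ ε hε
  have hrows := tendsto_tsum_abs_of_tendsto_tsum_mul
    (fun n => summable_abs_map_c0Single ((χ n).comp T))
    (fun b hb => hseq χ hχ ((c0DualPairing hb).comp (ContinuousLinearMap.precomp ℝ T)))
  filter_upwards [hrows.eventually (ge_mem_nhds hε)] with n hn
  rintro _ ⟨x, hx, rfl⟩
  calc |χ n (T x)| ≤ (∑' k, |χ n (T (c0Single k))|) * ‖x‖ :=
        abs_map_le_tsum_mul_norm ((χ n).comp T) x
    _ ≤ ε * 1 := mul_le_mul hn (mem_closedBall_zero_iff.1 hx) (norm_nonneg x) hε.le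
    _ = ε := mul_one ε

theorem stmt11_general {E : Type*} [AddCommGroup E] [Module ℝ E] [TopologicalSpace E]
    (hseq : ∀ χ : ℕ → E →L[ℝ] ℝ,
      (∀ x : E, Tendsto (fun n => χ n x) atTop (𝓝 0)) →
      ∀ Ψ : (E →L[ℝ] ℝ) →L[ℝ] ℝ, Tendsto (fun n => Ψ (χ n)) atTop (𝓝 0))
    (T : C₀(ℕ, ℝ) →L[ℝ] E)
    (hT : ¬ BarrelPrecompact (T '' Metric.closedBall 0 1)) :
    ¬ GelfandPhillips E := fun hGP =>
  hT (hGP _ (barrelBounded_image_closedBall T) (limitedSet_image_closedBall hseq T))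

/-- If the identity map `E'_{w*} → (E'_β)_w` is sequentially continuous and there is a
continuous linear operator `T : c₀ → E` whose image of the closed unit ball is not
barrel-precompact, then `E` is not Gelfand–Phillips.  (Here the strong dual `E'_β` is the
space of continuous linear functionals with the topology of uniform convergence on bounded
sets, and its weak topology is tested against its own continuous linear functionals.) -/
theorem stmt11 {E : Type*} [AddCommGroup E] [Module ℝ E] [TopologicalSpace E]
    [IsTopologicalAddGroup E] [ContinuousSMul ℝ E] [LocallyConvexSpace ℝ E]
    (hseq : ∀ χ : ℕ → E →L[ℝ] ℝ,
      (∀ x : E, Tendsto (fun n => χ n x) atTop (𝓝 0)) →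
      ∀ Ψ : (E →L[ℝ] ℝ) →L[ℝ] ℝ, Tendsto (fun n => Ψ (χ n)) atTop (𝓝 0))
    (T : C₀(ℕ, ℝ) →L[ℝ] E)
    (hT : ¬ BarrelPrecompact (T '' Metric.closedBall 0 1)) :
    ¬ GelfandPhillips E :=
  stmt11_general hseq T hT
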